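/- arXiv:2603.04629 — 5 statements merged into one kernel-verified Lean document; each statement's English description precedes it below -/
import Mathlib

section
/- For every measurable function $f$ on $[0,1]$, the quantity $\|f\|_{\varphi,\psi}$ coincides with the infimum of $\sum_{n=1}^\infty \psi(n)\,\|f_n\|_\infty\,\varphi(\|f_n\|_1/\|f_n\|_\infty)$ taken over all sequences $\{f_n\}_{n=1}^\infty\subset L^\infty[0,1]$ (no sign restriction) such that $f=\sum_{n=1}^\infty f_n$ almost everywhere. -/
open MeasureTheory ENNReal Set Filter Topology

noncomputable section

/-- Lebesgue measure restricted to the interval `[0,1]`. -/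
def μ01 : Measure ℝ := volume.restrict (Set.Icc 0 1)

/-- `φ : [0,1] → [0,∞)` is concave, non-decreasing, and vanishes only at the origin. -/
structure IsPhi (φ : ℝ → ℝ) : Prop where
  concave : ConcaveOn ℝ (Set.Icc 0 1) φ
  mono : MonotoneOn φ (Set.Icc 0 1)
  zero : φ 0 = 0
  pos : ∀ t : ℝ, 0 < t → t ≤ 1 → 0 < φ t

/-- `ψ : [0,∞) → [0,∞)` is concave, non-decreasing, and vanishes only at the origin. -/
structure IsPsi (ψ : ℝ → ℝ) : Prop where
  concave : ConcaveOn ℝ (Set.Ici 0) ψ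
  mono : MonotoneOn ψ (Set.Ici 0)
  zero : ψ 0 = 0
  pos : ∀ t : ℝ, 0 < t → 0 < ψ t

/-- A sequence `g` of nonnegative `L^∞` functions with `|f| ≤ ∑ₙ gₙ` a.e. -/
def Admissible (f : ℝ → ℝ) (g : ℕ → ℝ → ℝ) : Prop :=
  (∀ n, AEMeasurable (g n) μ01) ∧
  (∀ n, eLpNorm (g n) ⊤ μ01 < ⊤) ∧
  (∀ n x, 0 ≤ g n x) ∧
  (∀ᵐ x ∂μ01, ENNReal.ofReal |f x| ≤ ∑' n : ℕ, ENNReal.ofReal (g n x))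

/-- The cost `∑ₙ ψ(n) ‖gₙ‖_∞ φ(‖gₙ‖₁/‖gₙ‖_∞)` of a decomposition (index shifted by 1;
`0/0 = 0` by the `ℝ≥0∞` division convention, and `φ 0 = 0`). -/
def seqCost (φ ψ : ℝ → ℝ) (g : ℕ → ℝ → ℝ) : ℝ≥0∞ :=
  ∑' n : ℕ, ENNReal.ofReal
    (ψ ((n : ℝ) + 1) * (eLpNorm (g n) ⊤ μ01).toReal *
      φ ((eLpNorm (g n) 1 μ01 / eLpNorm (g n) ⊤ μ01).toReal))

/-- The quasi-norm `‖f‖_{φ,ψ}` (equal to `∞` when no admissible decomposition exists). -/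
def QANorm (φ ψ : ℝ → ℝ) (f : ℝ → ℝ) : ℝ≥0∞ :=
  ⨅ (g : ℕ → ℝ → ℝ) (_ : Admissible f g), seqCost φ ψ g

/-- Membership in the space `QA_{φ,ψ}`. -/
def MemQA (φ ψ : ℝ → ℝ) (f : ℝ → ℝ) : Prop :=
  AEMeasurable f μ01 ∧ QANorm φ ψ f < ⊤

/-- The decreasing rearrangement `f*` of `f` on `[0,1]`. -/
def decRearr (f : ℝ → ℝ) (t : ℝ) : ℝ :=
  sInf {s : ℝ | 0 ≤ s ∧ μ01 {x | s < |f x|} ≤ ENNReal.ofReal t}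

/-- The limit `ζ(0⁺)` of a non-decreasing function `ζ` on `[0,1]`. -/
def limZero (ζ : ℝ → ℝ) : ℝ := sInf (ζ '' Set.Ioc 0 1)

/-- The Lorentz norm `‖f‖_{Λ_ζ} = ∫₀¹ f* dζ = ‖f‖_∞ ζ(0⁺) + ∫₀¹ f*(s) ζ'(s) ds`
(for `ζ` concave the derivative exists a.e. and `ζ` is absolutely continuous on `(0,1]`). -/
def lorentzNorm (ζ : ℝ → ℝ) (f : ℝ → ℝ) : ℝ≥0∞ :=
  eLpNorm f ⊤ μ01 * ENNReal.ofReal (limZero ζ) +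
    ∫⁻ s in Set.Ioc (0:ℝ) 1, ENNReal.ofReal (decRearr f s * deriv ζ s)

/-- Membership in the Lorentz space `Λ_ζ`. -/
def MemLorentz (ζ : ℝ → ℝ) (f : ℝ → ℝ) : Prop :=
  AEMeasurable f μ01 ∧ lorentzNorm ζ f < ⊤

/-- The quasi-concave function `φ_s(t) = inf_n max{sₙ,t} (φ(sₙ)/sₙ) ψ(n)` (index shifted by 1). -/
def phiSeq (φ ψ : ℝ → ℝ) (s : ℕ → ℝ) (t : ℝ) : ℝ :=
  if t = 0 then 0 else ⨅ n : ℕ, max (s n) t * (φ (s n) / s n) * ψ ((n : ℝ) + 1)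

/-- The function `τ(t) = φ(t) ψ(logbar(φ(t)/t))` with `logbar t = 1 + log⁺ t`. -/
def tauF (φ ψ : ℝ → ℝ) (t : ℝ) : ℝ :=
  if t = 0 then 0 else φ t * ψ (1 + max (Real.log (φ t / t)) 0)

/-- A sequence of (not necessarily nonnegative) `L^∞` functions with `f = ∑ₙ gₙ` a.e. -/
def AdmissibleEq (f : ℝ → ℝ) (g : ℕ → ℝ → ℝ) : Prop :=
  (∀ n, AEMeasurable (g n) μ01) ∧
  (∀ n, eLpNorm (g n) ⊤ μ01 < ⊤) ∧
  (∀ᵐ x ∂μ01, HasSum (fun n : ℕ => g n x) (f x))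

/-!
A signed decomposition `f = ∑ fₙ` yields the nonnegative one `|fₙ|` with the same cost.
Conversely, if `|f| ≤ ∑ gₙ` with `gₙ ≥ 0`, the increments of `min |f| (g₀ + ⋯ + gₙ₋₁)`,
multiplied by the sign of `f`, sum to `f` and satisfy `|fₙ| ≤ gₙ`. Since `φ` is concave with
`φ 0 = 0` and non-decreasing, `b φ(a/b)` is non-decreasing in both `a` and `b` on `0 ≤ a ≤ b`,
and `‖·‖₁ ≤ ‖·‖_∞` on `[0,1]`, so this does not increase the cost.
-/

instance : IsProbabilityMeasure μ01 := ⟨by simp [μ01, Real.volume_Icc]⟩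

namespace Real

theorem sign_mul_abs (r : ℝ) : sign r * |r| = r := by
  rcases lt_trichotomy r 0 with h | rfl | h
  · simp [sign_of_neg h, abs_of_neg h]
  · simp
  · simp [sign_of_pos h, abs_of_pos h]

theorem abs_sign_le_one (r : ℝ) : |sign r| ≤ 1 := by
  rcases sign_apply_eq r with h | h | h <;> simp [h]

theorem measurable_sign : Measurable sign := by
  unfold sign
  exact Measurable.ite measurableSet_Iio measurable_const
    (Measurable.ite measurableSet_Ioi measurable_const measurable_const)

end Real

namespace IsPhi

variable {φ : ℝ → ℝ}

theorem nonneg (hφ : IsPhi φ) {t : ℝ} (ht : t ∈ Icc (0 : ℝ) 1) : 0 ≤ φ t :=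
  hφ.zero ▸ hφ.mono (left_mem_Icc.2 zero_le_one) ht ht.1

theorem mul_le_apply_mul (hφ : IsPhi φ) {l t : ℝ} (ht : t ∈ Icc (0 : ℝ) 1)
    (hl₀ : 0 ≤ l) (hl₁ : l ≤ 1) : l * φ t ≤ φ (l * t) := by
  simpa [hφ.zero] using
    hφ.concave.2 ht (left_mem_Icc.2 zero_le_one) hl₀ (sub_nonneg.2 hl₁) (add_sub_cancel l 1)

theorem mul_apply_div_le_mul_apply_div_of_le_right (hφ : IsPhi φ) {a b B : ℝ}
    (ha : 0 ≤ a) (hab : a ≤ b) (hbB : b ≤ B) : b * φ (a / b) ≤ B * φ (a / B) := by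
  have hB : 0 ≤ B := ha.trans (hab.trans hbB)
  have haB : a / B ∈ Icc (0 : ℝ) 1 := ⟨div_nonneg ha hB, div_le_one_of_le₀ (hab.trans hbB) hB⟩
  rcases (ha.trans hab).eq_or_lt with rfl | hb
  · simpa using mul_nonneg hB (hφ.nonneg haB)
  have hB : 0 < B := hb.trans_le hbB
  have hab' : a / b ∈ Icc (0 : ℝ) 1 := ⟨div_nonneg ha hb.le, div_le_one_of_le₀ hab hb.le⟩
  calc b * φ (a / b) = B * ((b / B) * φ (a / b)) := by field_simp
    _ ≤ B * φ ((b / B) * (a / b)) := by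
      gcongr
      exact hφ.mul_le_apply_mul hab' (div_nonneg hb.le hB.le) (div_le_one_of_le₀ hbB hB.le)
    _ = B * φ (a / B) := by field_simp

theorem mul_apply_div_le_mul_apply_div_of_le_left (hφ : IsPhi φ) {a A B : ℝ}
    (ha : 0 ≤ a) (haA : a ≤ A) (hAB : A ≤ B) : B * φ (a / B) ≤ B * φ (A / B) := by
  have hB : 0 ≤ B := ha.trans (haA.trans hAB)
  gcongr
  exact hφ.mono ⟨div_nonneg ha hB, div_le_one_of_le₀ (haA.trans hAB) hB⟩
    ⟨div_nonneg (ha.trans haA) hB, div_le_one_of_le₀ hAB hB⟩ (by gcongr)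

theorem toReal_mul_apply_div_le {a b A B : ℝ≥0∞} (hφ : IsPhi φ)
    (hab : a ≤ b) (haA : a ≤ A) (hbB : b ≤ B) (hAB : A ≤ B) (hB : B ≠ ⊤) :
    b.toReal * φ (a / b).toReal ≤ B.toReal * φ (A / B).toReal := by
  have hb : b ≠ ⊤ := ne_top_of_le_ne_top hB hbB
  rw [toReal_div, toReal_div]
  exact (hφ.mul_apply_div_le_mul_apply_div_of_le_right toReal_nonneg (toReal_mono hb hab)
    (toReal_mono hB hbB)).trans (hφ.mul_apply_div_le_mul_apply_div_of_le_left toReal_nonneg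
    (toReal_mono (ne_top_of_le_ne_top hB hAB) haA) (toReal_mono hB hAB))

theorem eLpNorm_mul_apply_div_le {α E F : Type*} [MeasurableSpace α] {μ : Measure α}
    [IsProbabilityMeasure μ] [NormedAddCommGroup E] [NormedAddCommGroup F] {u : α → E} {v : α → F}
    (hφ : IsPhi φ) (hu : AEStronglyMeasurable u μ) (hv : AEStronglyMeasurable v μ)
    (huv : ∀ᵐ x ∂μ, ‖u x‖ ≤ ‖v x‖) (hv_top : eLpNorm v ⊤ μ ≠ ⊤) :
    (eLpNorm u ⊤ μ).toReal * φ (eLpNorm u 1 μ / eLpNorm u ⊤ μ).toReal ≤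
      (eLpNorm v ⊤ μ).toReal * φ (eLpNorm v 1 μ / eLpNorm v ⊤ μ).toReal :=
  hφ.toReal_mul_apply_div_le (eLpNorm_le_eLpNorm_of_exponent_le le_top hu)
    (eLpNorm_mono_ae huv) (eLpNorm_mono_ae huv) (eLpNorm_le_eLpNorm_of_exponent_le le_top hv) hv_top

end IsPhi

theorem IsPsi.nonneg {ψ : ℝ → ℝ} (hψ : IsPsi ψ) {t : ℝ} (ht : 0 ≤ t) : 0 ≤ ψ t :=
  hψ.zero ▸ hψ.mono self_mem_Ici ht ht

section seqCost

variable {φ ψ : ℝ → ℝ}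

theorem seqCost_abs (g : ℕ → ℝ → ℝ) : seqCost φ ψ (fun n x => |g n x|) = seqCost φ ψ g := by
  simp only [seqCost, ← Real.norm_eq_abs, eLpNorm_norm]

theorem seqCost_mono (hφ : IsPhi φ) (hψ : IsPsi ψ) {g h : ℕ → ℝ → ℝ}
    (hh : ∀ n, AEMeasurable (h n) μ01) (hg : ∀ n, AEMeasurable (g n) μ01)
    (hg_top : ∀ n, eLpNorm (g n) ⊤ μ01 ≠ ⊤) (hhg : ∀ n, ∀ᵐ x ∂μ01, ‖h n x‖ ≤ ‖g n x‖) :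
    seqCost φ ψ h ≤ seqCost φ ψ g := by
  refine ENNReal.tsum_le_tsum fun n => ENNReal.ofReal_le_ofReal ?_
  simp only [mul_assoc]
  exact mul_le_mul_of_nonneg_left (hφ.eLpNorm_mul_apply_div_le (hh n).aestronglyMeasurable
    (hg n).aestronglyMeasurable (hhg n) (hg_top n)) (hψ.nonneg (by positivity))

end seqCost

theorem AdmissibleEq.admissible_abs {f : ℝ → ℝ} {g : ℕ → ℝ → ℝ} (hg : AdmissibleEq f g) :
    Admissible f (fun n x => |g n x|) := by
  obtain ⟨hmeas, hfin, hsum⟩ := hg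
  refine ⟨fun n => (hmeas n).abs, fun n => ?_, fun n x => abs_nonneg _, ?_⟩
  · simpa only [← Real.norm_eq_abs, eLpNorm_norm] using hfin n
  · filter_upwards [hsum] with x hx
    simpa only [Real.enorm_eq_ofReal_abs] using
      hx.enorm_le_of_bounded ENNReal.summable.hasSum fun n => le_rfl

section truncPiece

open Finset

def truncPiece (c : ℝ) (g : ℕ → ℝ) (n : ℕ) : ℝ :=
  Real.sign c * (min |c| (∑ k ∈ range (n + 1), g k) - min |c| (∑ k ∈ range n, g k))

theorem abs_truncPiece_le (c : ℝ) (g : ℕ → ℝ) (n : ℕ) : |truncPiece c g n| ≤ |g n| := by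
  rw [truncPiece, abs_mul]
  calc |Real.sign c| * |min |c| (∑ k ∈ range (n + 1), g k) - min |c| (∑ k ∈ range n, g k)|
      ≤ 1 * max |(|c| - |c|)| |∑ k ∈ range (n + 1), g k - ∑ k ∈ range n, g k| :=
        mul_le_mul (Real.abs_sign_le_one c) (abs_min_sub_min_le_max _ _ _ _) (abs_nonneg _)
          zero_le_one
    _ = |g n| := by simp [sum_range_succ]

theorem tendsto_min_sum_range {c : ℝ} {g : ℕ → ℝ} (hg : ∀ n, 0 ≤ g n)
    (hc : ENNReal.ofReal c ≤ ∑' n, ENNReal.ofReal (g n)) :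
    Tendsto (fun N => min c (∑ k ∈ range N, g k)) atTop (𝓝 c) := by
  by_cases hs : Summable g
  · rw [← ENNReal.ofReal_tsum_of_nonneg hg hs,
      ENNReal.ofReal_le_ofReal_iff (tsum_nonneg hg)] at hc
    have := (tendsto_const_nhds (x := c)).min hs.hasSum.tendsto_sum_nat
    rwa [min_eq_left hc] at this
  · refine tendsto_const_nhds.congr' ?_
    filter_upwards [((not_summable_iff_tendsto_nat_atTop_of_nonneg hg).1 hs).eventually_ge_atTop c]
      with N hN
    exact (min_eq_left hN).symm

theorem hasSum_truncPiece {c : ℝ} {g : ℕ → ℝ} (hg : ∀ n, 0 ≤ g n)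
    (hc : ENNReal.ofReal |c| ≤ ∑' n, ENNReal.ofReal (g n)) : HasSum (truncPiece c g) c := by
  set F : ℕ → ℝ := fun N => min |c| (∑ k ∈ range N, g k)
  have hF_mono : ∀ n, 0 ≤ F (n + 1) - F n := fun n =>
    sub_nonneg.2 (min_le_min le_rfl (sum_le_sum_of_subset_of_nonneg (range_subset_range.2 n.le_succ)
      fun k _ _ => hg k))
  have hF : HasSum (fun n => F (n + 1) - F n) |c| := by
    rw [hasSum_iff_tendsto_nat_of_nonneg hF_mono]
    refine (tendsto_min_sum_range hg hc).congr fun N => ?_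
    simp [sum_range_sub F, F]
  have := hF.mul_left (Real.sign c)
  rwa [Real.sign_mul_abs] at this

end truncPiece

theorem Admissible.admissibleEq_truncPiece {f : ℝ → ℝ} {g : ℕ → ℝ → ℝ} (hf : AEMeasurable f μ01)
    (hg : Admissible f g) : AdmissibleEq f (fun n x => truncPiece (f x) (fun k => g k x) n) := by
  obtain ⟨hmeas, hfin, hnn, hsum⟩ := hg
  refine ⟨fun n => ?_, fun n => ?_, ?_⟩
  · have hS : ∀ N, AEMeasurable (fun x => ∑ k ∈ Finset.range N, g k x) μ01 := fun N =>
      Finset.aemeasurable_fun_sum _ fun k _ => hmeas k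
    exact (Real.measurable_sign.comp_aemeasurable hf).mul
      ((hf.abs.min (hS (n + 1))).sub (hf.abs.min (hS n)))
  · refine (eLpNorm_mono fun x => ?_).trans_lt (hfin n)
    simpa only [Real.norm_eq_abs, abs_abs] using abs_truncPiece_le (f x) (fun k => g k x) n
  · filter_upwards [hsum] with x hx
    exact hasSum_truncPiece (fun n => hnn n x) hx

/-- `‖f‖_{φ,ψ}` equals the infimum of the same cost over all decompositions
`f = ∑ₙ fₙ` a.e. by arbitrary (signed) `L^∞` functions. -/
theorem stmt0 {φ ψ : ℝ → ℝ} (hφ : IsPhi φ) (hψ : IsPsi ψ)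
    (f : ℝ → ℝ) (hf : AEMeasurable f μ01) :
    QANorm φ ψ f = ⨅ (g : ℕ → ℝ → ℝ) (_ : AdmissibleEq f g), seqCost φ ψ g := by
  refine le_antisymm (le_iInf₂ fun g hg => ?_) (le_iInf₂ fun g hg => ?_)
  · rw [← seqCost_abs]
    exact iInf₂_le _ hg.admissible_abs
  · have hh := hg.admissibleEq_truncPiece hf
    obtain ⟨hg_meas, hg_top, hg_nonneg, -⟩ := hg
    refine (iInf₂_le _ hh).trans
      (seqCost_mono hφ hψ hh.1 hg_meas (fun n => (hg_top n).ne) fun n => .of_forall fun x => ?_)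
    simpa only [Real.norm_eq_abs, abs_of_nonneg (hg_nonneg n x)] using
      abs_truncPiece_le (f x) (fun k => g k x) n
end
end

section
/- The functional $\|\cdot\|_{\varphi,\psi}$ satisfies the quasi-triangle inequality with constant $4$: for all $f_1,f_2\in QA_{\varphi,\psi}$, $\|f_1+f_2\|_{\varphi,\psi}\le 4\,(\|f_1\|_{\varphi,\psi}+\|f_2\|_{\varphi,\psi})$. -/
open MeasureTheory ENNReal Set Filter Topology

noncomputable section

/-!
Interleave decompositions of `f₁` and `f₂`: the `n`-th summands move to the positions `2n` and
`2n + 1`, whose weights `ψ(2n + 1)` and `ψ(2n + 2)` are at most `2 ψ(n + 1)` because a concave `ψ`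
with `ψ 0 = 0` satisfies `ψ(2t) ≤ 2 ψ(t)`. This already gives the constant `2`.
-/

namespace Stream'

variable {α : Type*}

@[simp]
theorem interleave_two_mul (s₁ s₂ : ℕ → α) (n : ℕ) : (s₁ ⋈ s₂) (2 * n) = s₁ n :=
  get_interleave_left n s₁ s₂

@[simp]
theorem interleave_two_mul_add_one (s₁ s₂ : ℕ → α) (n : ℕ) :
    (s₁ ⋈ s₂) (2 * n + 1) = s₂ n :=
  get_interleave_right n s₁ s₂

theorem forall_interleave {P : α → Prop} {s₁ s₂ : ℕ → α} (h₁ : ∀ n, P (s₁ n))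
    (h₂ : ∀ n, P (s₂ n)) (n : ℕ) : P ((s₁ ⋈ s₂) n) := by
  obtain ⟨m, rfl | rfl⟩ := Nat.even_or_odd' n
  · simpa using h₁ m
  · simpa using h₂ m

end Stream'

namespace IsPsi

variable {ψ : ℝ → ℝ}

theorem nonneg_s3 (hψ : IsPsi ψ) {t : ℝ} (ht : 0 ≤ t) : 0 ≤ ψ t :=
  hψ.zero ▸ hψ.mono self_mem_Ici ht ht

theorem le_two_mul_of_le (hψ : IsPsi ψ) {a b : ℝ} (ha : 0 ≤ a) (hab : a ≤ 2 * b) :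
    ψ a ≤ 2 * ψ b := by
  have h2b : (0 : ℝ) ≤ 2 * b := ha.trans hab
  have hmid := hψ.concave.2 h2b self_mem_Ici (by norm_num : (0 : ℝ) ≤ 1 / 2)
    (by norm_num : (0 : ℝ) ≤ 1 / 2) (by norm_num)
  simp only [smul_eq_mul, mul_zero, add_zero, hψ.zero] at hmid
  rw [show 1 / 2 * (2 * b) = b by ring] at hmid
  linarith [hψ.mono ha h2b hab]

theorem ofReal_mul_le_two_mul (hψ : IsPsi ψ) {a b : ℝ} (ha : 0 ≤ a) (hab : a ≤ 2 * b) (x : ℝ) :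
    ENNReal.ofReal (ψ a * x) ≤ 2 * ENNReal.ofReal (ψ b * x) := by
  rw [ENNReal.ofReal_mul (hψ.nonneg_s3 ha), ENNReal.ofReal_mul (hψ.nonneg_s3 (by linarith)),
    ← mul_assoc, ← ENNReal.ofReal_ofNat 2, ← ENNReal.ofReal_mul zero_le_two]
  gcongr
  exact hψ.le_two_mul_of_le ha hab

end IsPsi

theorem Admissible.interleave {f₁ f₂ : ℝ → ℝ} {g h : ℕ → ℝ → ℝ} (hg : Admissible f₁ g)
    (hh : Admissible f₂ h) : Admissible (f₁ + f₂) (g ⋈ h) := by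
  obtain ⟨hg_meas, hg_fin, hg_nonneg, hg_dom⟩ := hg
  obtain ⟨hh_meas, hh_fin, hh_nonneg, hh_dom⟩ := hh
  refine ⟨Stream'.forall_interleave (P := (AEMeasurable · μ01)) hg_meas hh_meas,
    Stream'.forall_interleave (P := (eLpNorm · ⊤ μ01 < ⊤)) hg_fin hh_fin,
    Stream'.forall_interleave (P := fun u : ℝ → ℝ => ∀ x, 0 ≤ u x) hg_nonneg hh_nonneg, ?_⟩
  filter_upwards [hg_dom, hh_dom] with x hx₁ hx₂
  calc ENNReal.ofReal |(f₁ + f₂) x| ≤ ENNReal.ofReal |f₁ x| + ENNReal.ofReal |f₂ x| := by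
        rw [← ENNReal.ofReal_add (abs_nonneg _) (abs_nonneg _)]
        exact ENNReal.ofReal_le_ofReal (abs_add_le _ _)
    _ ≤ _ := by
        rw [← tsum_even_add_odd ENNReal.summable ENNReal.summable]
        simpa using add_le_add hx₁ hx₂

variable {φ ψ : ℝ → ℝ}

theorem seqCost_interleave_le (hψ : IsPsi ψ) (g h : ℕ → ℝ → ℝ) :
    seqCost φ ψ (g ⋈ h) ≤ 2 * (seqCost φ ψ g + seqCost φ ψ h) := by
  simp only [seqCost]
  rw [← tsum_even_add_odd ENNReal.summable ENNReal.summable, mul_add,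
    ← ENNReal.tsum_mul_left, ← ENNReal.tsum_mul_left]
  simp only [Stream'.interleave_two_mul, Stream'.interleave_two_mul_add_one]
  gcongr with m m <;> simp only [mul_assoc] <;>
    exact hψ.ofReal_mul_le_two_mul (by positivity) (by push_cast; linarith) _

theorem QANorm_add_le_two_mul (hψ : IsPsi ψ) (f₁ f₂ : ℝ → ℝ) :
    QANorm φ ψ (f₁ + f₂) ≤ 2 * (QANorm φ ψ f₁ + QANorm φ ψ f₂) := by
  unfold QANorm
  simp only [mul_add, ENNReal.mul_iInf_of_ne two_ne_zero ofNat_ne_top]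
  exact le_iInf₂_add_iInf₂ fun g hg h hh =>
    (iInf₂_le _ (hg.interleave hh)).trans ((seqCost_interleave_le hψ g h).trans_eq (mul_add ..))

theorem stmt3_general {φ ψ : ℝ → ℝ} (hψ : IsPsi ψ)
    (f₁ f₂ : ℝ → ℝ) :
    QANorm φ ψ (f₁ + f₂) ≤ 4 * (QANorm φ ψ f₁ + QANorm φ ψ f₂) :=
  (QANorm_add_le_two_mul hψ f₁ f₂).trans (mul_le_mul_left (by norm_num) _)

/-- the quasi-triangle inequality with constant `4`:
`‖f₁ + f₂‖_{φ,ψ} ≤ 4 (‖f₁‖_{φ,ψ} + ‖f₂‖_{φ,ψ})` for `f₁, f₂ ∈ QA_{φ,ψ}`. -/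
theorem stmt3 {φ ψ : ℝ → ℝ} (hφ : IsPhi φ) (hψ : IsPsi ψ)
    (f₁ f₂ : ℝ → ℝ) (h₁ : MemQA φ ψ f₁) (h₂ : MemQA φ ψ f₂) :
    QANorm φ ψ (f₁ + f₂) ≤ 4 * (QANorm φ ψ f₁ + QANorm φ ψ f₂) :=
  stmt3_general hψ f₁ f₂
end
end

section
/- $QA_{\varphi,\psi}$ is rearrangement invariant: if $f$ and $g$ are measurable functions on $[0,1]$ that are equimeasurable, i.e. $\lambda(\{x:|f(x)|>s\})=\lambda(\{x:|g(x)|>s\})$ for every $s\ge 0$, then $\|f\|_{\varphi,\psi}=\|g\|_{\varphi,\psi}$ (in particular $f\in QA_{\varphi,\psi}$ if and only if $g\in QA_{\varphi,\psi}$). -/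
open MeasureTheory ENNReal Set Filter Topology

noncomputable section

instance : NullSingletonClass μ01 := by
  unfold μ01; infer_instance

lemma μ01_Iic (t : ℝ) : μ01 (Iic t) = ENNReal.ofReal (min t 1) := by
  rw [μ01, Measure.restrict_apply measurableSet_Iic]
  have : Iic t ∩ Icc 0 1 = Icc 0 (min t 1) := by
    ext x; simp only [mem_inter_iff, mem_Iic, mem_Icc, le_min_iff]; tauto
  rw [this, Real.volume_Icc, sub_zero]

lemma μ01_le_volume (s : Set ℝ) : μ01 s ≤ volume s :=
  Measure.restrict_le_self s

lemma ae_pos_μ01 : ∀ᵐ t ∂μ01, 0 < t := by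
  refine measure_mono_null (t := Iic 0) (fun t (ht : ¬ 0 < t) => not_lt.1 ht) ?_
  simp [μ01_Iic]

section Distribution

def distrib (F : ℝ → ℝ) (u : ℝ) : ℝ≥0∞ := μ01 {x | u < F x}

variable {F : ℝ → ℝ}

lemma distrib_antitone : Antitone (distrib F) := fun _ _ huv =>
  measure_mono fun _ hx => lt_of_le_of_lt huv hx

lemma distrib_le_of_forall_lt {u : ℝ} {c : ℝ≥0∞} (h : ∀ v, u < v → distrib F v ≤ c) :
    distrib F u ≤ c := by
  have hU : {x | u < F x} = ⋃ n : ℕ, {x | u + 1 / (n + 1) < F x} := by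
    ext x
    simp only [mem_ofPred_eq, mem_iUnion]
    refine ⟨fun hx => ?_, fun ⟨n, hn⟩ => (lt_add_of_pos_right u Nat.one_div_pos_of_nat).trans hn⟩
    obtain ⟨n, hn⟩ := exists_nat_one_div_lt (sub_pos.2 hx)
    exact ⟨n, by linarith⟩
  have hmono : Monotone fun n : ℕ => {x | u + 1 / ((n : ℝ) + 1) < F x} := fun m n hmn x
    (hx : u + 1 / ((m : ℝ) + 1) < F x) => show u + 1 / ((n : ℝ) + 1) < F x by
      linarith [Nat.one_div_le_one_div (α := ℝ) hmn]
  rw [distrib, hU, hmono.measure_iUnion]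
  exact iSup_le fun n => h _ (lt_add_of_pos_right u Nat.one_div_pos_of_nat)

lemma le_measure_le_of_forall_lt (hF : Measurable F) {u : ℝ} {c : ℝ≥0∞}
    (h : ∀ v, v < u → c ≤ distrib F v) : c ≤ μ01 {x | u ≤ F x} := by
  have hI : {x | u ≤ F x} = ⋂ n : ℕ, {x | u - 1 / (n + 1) < F x} := by
    ext x
    simp only [mem_ofPred_eq, mem_iInter]
    refine ⟨fun hx n => (sub_lt_self u Nat.one_div_pos_of_nat).trans_le hx, fun hx => ?_⟩
    by_contra! hlt
    obtain ⟨n, hn⟩ := exists_nat_one_div_lt (sub_pos.2 hlt)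
    linarith [hx n]
  have hanti : Antitone fun n : ℕ => {x | u - 1 / ((n : ℝ) + 1) < F x} := fun m n hmn x
    (hx : u - 1 / ((n : ℝ) + 1) < F x) => show u - 1 / ((m : ℝ) + 1) < F x by
      linarith [Nat.one_div_le_one_div (α := ℝ) hmn]
  rw [hI, hanti.measure_iInter (fun n => (measurableSet_lt measurable_const hF).nullMeasurableSet)
    ⟨0, measure_ne_top _ _⟩]
  exact le_iInf fun n => h _ (sub_lt_self u Nat.one_div_pos_of_nat)

lemma exists_distrib_lt (hF : Measurable F) {c : ℝ≥0∞} (hc : 0 < c) :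
    ∃ n : ℕ, distrib F n < c := by
  have hanti : Antitone fun n : ℕ => {x | (n : ℝ) < F x} := fun m n hmn x
    (hx : (n : ℝ) < F x) => show (m : ℝ) < F x from lt_of_le_of_lt (Nat.cast_le.2 hmn) hx
  have hempty : ⋂ n : ℕ, {x | (n : ℝ) < F x} = ∅ :=
    eq_empty_of_forall_notMem fun x hx => by
      obtain ⟨n, hn⟩ := exists_nat_ge (F x)
      exact (mem_iInter.1 hx n).not_ge hn
  have := tendsto_measure_iInter_atTop (μ := μ01)
    (fun n => (measurableSet_lt measurable_const hF).nullMeasurableSet) hanti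
    ⟨0, measure_ne_top _ _⟩
  rw [hempty, measure_empty] at this
  exact ((tendsto_order.1 this).2 c hc).exists

lemma exists_lt_distrib {c : ℝ≥0∞} (hc : c < 1) : ∃ n : ℕ, c < distrib F (-n) := by
  have hmono : Monotone fun n : ℕ => {x | -(n : ℝ) < F x} := fun m n hmn x
    (hx : -(m : ℝ) < F x) => show -(n : ℝ) < F x from
      lt_of_le_of_lt (neg_le_neg (Nat.cast_le.2 hmn)) hx
  have huniv : ⋃ n : ℕ, {x | -(n : ℝ) < F x} = univ :=
    eq_univ_of_forall fun x => by
      obtain ⟨n, hn⟩ := exists_nat_gt (-F x)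
      exact mem_iUnion.2 ⟨n, neg_lt.1 hn⟩
  have := tendsto_measure_iUnion_atTop (μ := μ01) hmono
  rw [huniv, measure_univ] at this
  exact ((tendsto_order.1 this).1 c hc).exists

lemma distrib_add_measure_eq (hF : Measurable F) (u : ℝ) :
    distrib F u + μ01 {x | F x = u} = μ01 {x | u ≤ F x} := by
  rw [distrib, ← measure_union _ (measurableSet_eq_fun hF measurable_const)]
  · congr 1
    ext x
    simp only [mem_union, mem_ofPred_eq, le_iff_lt_or_eq, eq_comm]
  · exact disjoint_left.2 fun x hlt heq => (ne_of_gt hlt) heq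

end Distribution

section Rank

/-- The mass in front of `x` when `[0,1]` is sorted by decreasing `F`, ties being broken from
left to right. -/
def predMeasure (F : ℝ → ℝ) (x : ℝ) : ℝ≥0∞ :=
  distrib F (F x) + μ01 ({y | F y = F x} ∩ Iic x)

/-- Ryff's measure-preserving map `σ` with `|f| = f* ∘ σ`, for `F = |f|`. -/
def ryffMap (F : ℝ → ℝ) (x : ℝ) : ℝ := (predMeasure F x).toReal

variable {F : ℝ → ℝ}

lemma predMeasure_le (hF : Measurable F) (x : ℝ) : predMeasure F x ≤ μ01 {y | F x ≤ F y} :=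
  calc predMeasure F x ≤ distrib F (F x) + μ01 {y | F y = F x} := by
        unfold predMeasure; gcongr; exact inter_subset_left
    _ = μ01 {y | F x ≤ F y} := distrib_add_measure_eq hF _

lemma predMeasure_ne_top {x : ℝ} : predMeasure F x ≠ ∞ :=
  ENNReal.add_ne_top.2 ⟨measure_ne_top _ _, measure_ne_top _ _⟩

lemma ofReal_ryffMap (x : ℝ) : ENNReal.ofReal (ryffMap F x) = predMeasure F x :=
  ENNReal.ofReal_toReal predMeasure_ne_top

lemma ryffMap_nonneg (x : ℝ) : 0 ≤ ryffMap F x := ENNReal.toReal_nonneg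

lemma ryffMap_le_one (hF : Measurable F) (x : ℝ) : ryffMap F x ≤ 1 :=
  ENNReal.toReal_le_of_le_ofReal zero_le_one
    ((predMeasure_le hF x).trans (by rw [ENNReal.ofReal_one]; exact prob_le_one))

lemma measurable_ryffMap (hF : Measurable F) : Measurable (ryffMap F) := by
  have hS : MeasurableSet {p : ℝ × ℝ | F p.2 = F p.1 ∧ p.2 ≤ p.1} :=
    (measurableSet_eq_fun (hF.comp measurable_snd) (hF.comp measurable_fst)).inter
      (measurableSet_le measurable_snd measurable_fst)
  exact ((distrib_antitone.measurable.comp hF).add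
    (measurable_measure_prodMk_left (ν := μ01) hS)).ennreal_toReal

lemma continuous_measure_inter_Iic (L : Set ℝ) : Continuous fun x => μ01 (L ∩ Iic x) := by
  have hle : ∀ x y, μ01 (L ∩ Iic x) ≤ μ01 (L ∩ Iic y) + ENNReal.ofReal (dist x y) := by
    intro x y
    calc μ01 (L ∩ Iic x) ≤ μ01 (L ∩ Iic y ∪ Ioc y x) :=
          measure_mono fun z ⟨hzL, hzx⟩ =>
            if h : z ≤ y then Or.inl ⟨hzL, h⟩ else Or.inr ⟨not_le.1 h, hzx⟩
      _ ≤ μ01 (L ∩ Iic y) + volume (Ioc y x) :=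
          (measure_union_le _ _).trans (add_le_add_right (μ01_le_volume _) _)
      _ ≤ μ01 (L ∩ Iic y) + ENNReal.ofReal (dist x y) := by
          rw [Real.volume_Ioc, Real.dist_eq]
          gcongr
          exact le_abs_self _
  have hfin : ∀ x, μ01 (L ∩ Iic x) ≠ ∞ := fun x => measure_ne_top _ _
  have hlip : LipschitzWith 1 fun x => (μ01 (L ∩ Iic x)).toReal :=
    LipschitzWith.of_le_add_mul 1 fun x y => by
      have := ENNReal.toReal_mono (ENNReal.add_ne_top.2 ⟨hfin y, ENNReal.ofReal_ne_top⟩) (hle x y)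
      rw [NNReal.coe_one, one_mul]
      rwa [ENNReal.toReal_add (hfin y) ENNReal.ofReal_ne_top,
        ENNReal.toReal_ofReal dist_nonneg] at this
  simpa [Function.comp_def, ENNReal.ofReal_toReal (hfin _)] using
    ENNReal.continuous_ofReal.comp hlip.continuous

lemma measure_setOf_measure_inter_Iic_le {L : Set ℝ} {c : ℝ≥0∞} (hc : c ≤ μ01 L) :
    μ01 {x | x ∈ L ∧ μ01 (L ∩ Iic x) ≤ c} = c := by
  set m : ℝ → ℝ≥0∞ := fun x => μ01 (L ∩ Iic x)
  have hm_mono : Monotone m := fun x y hxy =>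
    measure_mono (inter_subset_inter_right _ (Iic_subset_Iic.2 hxy))
  rcases hc.eq_or_lt with rfl | hlt
  · congr 1
    ext x
    exact ⟨fun h => h.1, fun h => ⟨h, measure_mono inter_subset_left⟩⟩
  have hm0 : m (-1) = 0 := measure_mono_null inter_subset_right (by simp [μ01_Iic])
  have hm1 : m 1 = μ01 L := measure_inter_conull (by
    rw [prob_compl_eq_zero_iff measurableSet_Iic, μ01_Iic, min_self, ENNReal.ofReal_one])
  obtain ⟨x₀, hx₀⟩ : c ∈ range m :=
    intermediate_value_univ (-1) 1 (continuous_measure_inter_Iic L)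
      ⟨hm0.trans_le zero_le, hlt.le.trans_eq hm1.symm⟩
  set S := {x | m x ≤ c}
  have hS_bdd : BddAbove S := ⟨1, fun x hx => not_lt.1 fun h1 =>
    ((hm1 ▸ hm_mono h1.le).trans hx).not_gt hlt⟩
  have hsS : sSup S ∈ S :=
    (isClosed_le (continuous_measure_inter_Iic L) continuous_const).csSup_mem
      ⟨x₀, hx₀.le⟩ hS_bdd
  have hset : {x | x ∈ L ∧ m x ≤ c} = L ∩ Iic (sSup S) := by
    ext x
    exact ⟨fun ⟨hxL, hx⟩ => ⟨hxL, le_csSup hS_bdd hx⟩,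
      fun ⟨hxL, hx⟩ => ⟨hxL, (hm_mono hx).trans hsS⟩⟩
  rw [hset]
  exact le_antisymm hsS (hx₀ ▸ hm_mono (le_csSup hS_bdd hx₀.le))

lemma measure_predMeasure_le (hF : Measurable F) {c : ℝ≥0∞} (hc : c < 1) :
    μ01 {x | predMeasure F x ≤ c} = c := by
  set U := {u | distrib F u ≤ c}
  rcases U.eq_empty_or_nonempty with hU | hU
  · have hc0 : c = 0 := by
      by_contra h
      obtain ⟨n, hn⟩ := exists_distrib_lt hF (pos_iff_ne_zero.2 h)
      exact eq_empty_iff_forall_notMem.1 hU n hn.le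
    have hempty : {x | predMeasure F x ≤ c} = ∅ := eq_empty_of_forall_notMem fun x hx =>
      eq_empty_iff_forall_notMem.1 hU (F x) (show distrib F (F x) ≤ c from le_self_add.trans hx)
    rw [hempty, measure_empty, hc0]
  -- `{predMeasure F ≤ c}` is `{F > u₀}` followed by an initial piece of the level set `{F = u₀}`.
  obtain ⟨N, hN⟩ := exists_lt_distrib (F := F) hc
  have hU_bdd : BddBelow U := ⟨-N, fun u hu => not_lt.1 fun hlt =>
    (hN.trans_le (distrib_antitone hlt.le)).not_ge hu⟩
  set u₀ := sInf U
  have hnotU : ∀ v, v < u₀ → c < distrib F v := fun v hv =>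
    not_le.1 fun h => (csInf_le hU_bdd h).not_gt hv
  have hd : distrib F u₀ ≤ c := distrib_le_of_forall_lt fun v hv => by
    obtain ⟨w, hwU, hwv⟩ := exists_lt_of_csInf_lt hU hv
    exact (distrib_antitone hwv.le).trans hwU
  set L := {y | F y = u₀}
  have hL : MeasurableSet L := measurableSet_eq_fun hF measurable_const
  have hcL : c - distrib F u₀ ≤ μ01 L := by
    rw [tsub_le_iff_left, distrib_add_measure_eq hF]
    exact le_measure_le_of_forall_lt hF fun v hv => (hnotU v hv).le
  have hsplit : {x | predMeasure F x ≤ c} =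
      {x | u₀ < F x} ∪ {x | x ∈ L ∧ μ01 (L ∩ Iic x) ≤ c - distrib F u₀} := by
    ext x
    simp only [mem_ofPred_eq, mem_union]
    rcases lt_trichotomy (F x) u₀ with h | h | h
    · have : c < predMeasure F x := (hnotU _ h).trans_le le_self_add
      simp only [this.not_ge, h.not_gt, false_or, false_iff, not_and, not_le]
      exact fun hx => absurd hx h.ne
    · have hx : predMeasure F x = distrib F u₀ + μ01 (L ∩ Iic x) := by
        simp only [predMeasure, h, L]
      simp only [hx, h, lt_irrefl, false_or, true_and, L, mem_ofPred_eq]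
      exact (ENNReal.le_sub_iff_add_le_left (measure_ne_top _ _) hd).symm
    · simp only [h, true_or, iff_true]
      exact (predMeasure_le hF x).trans
        ((measure_mono fun y (hy : F x ≤ F y) => h.trans_le hy).trans hd)
  have hdisj : Disjoint {x | u₀ < F x} {x | x ∈ L ∧ μ01 (L ∩ Iic x) ≤ c - distrib F u₀} :=
    disjoint_left.2 fun x hlt ⟨hxL, _⟩ => (ne_of_gt hlt) hxL
  have hmeas : MeasurableSet {x | x ∈ L ∧ μ01 (L ∩ Iic x) ≤ c - distrib F u₀} :=
    hL.inter (measurableSet_le (Monotone.measurable fun x y hxy =>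
      measure_mono (inter_subset_inter_right _ (Iic_subset_Iic.2 hxy))) measurable_const)
  rw [hsplit, measure_union hdisj hmeas, measure_setOf_measure_inter_Iic_le hcL]
  exact add_tsub_cancel_of_le hd

theorem measurePreserving_ryffMap (hF : Measurable F) : MeasurePreserving (ryffMap F) μ01 μ01 := by
  refine ⟨measurable_ryffMap hF, Measure.ext_of_Iic _ _ fun t => ?_⟩
  rw [Measure.map_apply (measurable_ryffMap hF) measurableSet_Iic, μ01_Iic]
  rcases lt_or_ge t 0 with ht0 | ht0
  · rw [ENNReal.ofReal_of_nonpos (min_le_of_left_le ht0.le)]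
    exact measure_mono_null
      (fun x (hx : ryffMap F x ≤ t) => (ryffMap_nonneg x).not_gt (hx.trans_lt ht0)) measure_empty
  rcases lt_or_ge t 1 with ht1 | ht1
  · have hpre : ryffMap F ⁻¹' Iic t = {x | predMeasure F x ≤ ENNReal.ofReal t} := by
      ext x
      exact (ENNReal.le_ofReal_iff_toReal_le predMeasure_ne_top ht0).symm
    rw [hpre, measure_predMeasure_le hF (ENNReal.ofReal_lt_one.2 ht1), min_eq_left ht1.le]
  · rw [show ryffMap F ⁻¹' Iic t = univ from
      eq_univ_of_forall fun x => (ryffMap_le_one hF x).trans ht1, measure_univ,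
      min_eq_right ht1, ENNReal.ofReal_one]

end Rank

lemma ae_eq_of_le_of_measure_lt_eq {α : Type*} [MeasurableSpace α] {μ : Measure α}
    [IsFiniteMeasure μ] {u v : α → ℝ} (hu : AEMeasurable u μ) (huv : ∀ x, u x ≤ v x)
    (h : ∀ s, μ {x | s < u x} = μ {x | s < v x}) : u =ᵐ[μ] v := by
  have hnull : ∀ q : ℚ, μ ({x | (q : ℝ) < v x} \ {x | (q : ℝ) < u x}) = 0 := fun q => by
    have hsub : {x | (q : ℝ) < u x} ⊆ {x | (q : ℝ) < v x} := fun x hx => hx.trans_le (huv x)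
    rw [measure_sdiff hsub (nullMeasurableSet_lt aemeasurable_const hu) (measure_ne_top _ _), h,
      tsub_self]
  refine ae_iff.2 (measure_mono_null (fun x (hx : u x ≠ v x) => ?_) (measure_iUnion_null hnull))
  obtain ⟨q, hqu, hqv⟩ := exists_rat_btwn ((huv x).lt_of_ne hx)
  exact mem_iUnion.2 ⟨q, hqv, hqu.not_gt⟩

section Rearrangement

variable {f : ℝ → ℝ}

lemma decRearr_nonneg (f : ℝ → ℝ) (t : ℝ) : 0 ≤ decRearr f t :=
  Real.sInf_nonneg fun _ hs => hs.1

lemma decRearr_ryffMap_le (f : ℝ → ℝ) (x : ℝ) :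
    decRearr f (ryffMap (fun y => |f y|) x) ≤ |f x| :=
  csInf_le ⟨0, fun _ hs => hs.1⟩ ⟨abs_nonneg _, by rw [ofReal_ryffMap]; exact le_self_add⟩

lemma lt_decRearr_iff (hf : Measurable f) {s t : ℝ} (hs : 0 ≤ s) (ht : 0 < t) :
    s < decRearr f t ↔ ENNReal.ofReal t < μ01 {x | s < |f x|} := by
  constructor
  · intro h
    by_contra! h'
    exact h.not_ge (csInf_le ⟨0, fun _ h => h.1⟩ ⟨hs, h'⟩)
  · intro h
    obtain ⟨v, hsv, hv⟩ : ∃ v, s < v ∧ ENNReal.ofReal t < distrib (fun x => |f x|) v := by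
      by_contra! H
      exact h.not_ge (distrib_le_of_forall_lt H)
    obtain ⟨n, hn⟩ := exists_distrib_lt hf.abs (ENNReal.ofReal_pos.2 ht)
    refine hsv.trans_le (le_csInf ⟨n, n.cast_nonneg, hn.le⟩ fun w ⟨_, hw⟩ => ?_)
    by_contra! hwv
    exact (hv.trans_le (distrib_antitone hwv.le)).not_ge hw

lemma decRearr_of_nonpos (f : ℝ → ℝ) {t : ℝ} (ht : t ≤ 0) : decRearr f t = decRearr f 0 := by
  simp only [decRearr, ENNReal.ofReal_of_nonpos ht, ENNReal.ofReal_zero]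

lemma measurable_decRearr (hf : Measurable f) : Measurable (decRearr f) := by
  refine measurable_of_Ioi fun s => ?_
  rcases lt_or_ge s 0 with hs | hs
  · rw [show decRearr f ⁻¹' Ioi s = univ from
      eq_univ_of_forall fun t => hs.trans_le (decRearr_nonneg f t)]
    exact MeasurableSet.univ
  have hpre : decRearr f ⁻¹' Ioi s = Ioi 0 ∩ {t | ENNReal.ofReal t < μ01 {x | s < |f x|}} ∪
      Iic 0 ∩ {_t | s < decRearr f 0} := by
    ext t
    rcases lt_or_ge 0 t with ht | ht
    · simp [ht, ht.not_ge, lt_decRearr_iff hf hs ht]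
    · simp [ht, not_lt.2 ht, decRearr_of_nonpos f ht]
  rw [hpre]
  exact (measurableSet_Ioi.inter
    (measurableSet_lt ENNReal.measurable_ofReal measurable_const)).union
    (measurableSet_Iic.inter (MeasurableSet.const _))

lemma measure_lt_decRearr (hf : Measurable f) {s : ℝ} (hs : 0 ≤ s) :
    μ01 {t | s < decRearr f t} = μ01 {x | s < |f x|} := by
  set d := μ01 {x | s < |f x|}
  have hae : {t | s < decRearr f t} =ᵐ[μ01] Iic d.toReal := by
    refine EventuallyEq.trans ?_ Iio_ae_eq_Iic
    filter_upwards [ae_pos_μ01] with t ht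
    exact propext ((lt_decRearr_iff hf hs ht).trans
      (ENNReal.ofReal_lt_iff_lt_toReal ht.le (measure_ne_top _ _)))
  rw [measure_congr hae, μ01_Iic, min_eq_left (ENNReal.toReal_le_of_le_ofReal zero_le_one
    (ENNReal.ofReal_one ▸ prob_le_one)), ENNReal.ofReal_toReal (measure_ne_top _ _)]

/-- Ryff's theorem. As `f* ∘ σ ≤ |f|` everywhere and both are equimeasurable (`σ` preserves
measure), they agree almost everywhere. -/
theorem decRearr_comp_ryffMap_ae_eq (hf : Measurable f) :
    (fun x => decRearr f (ryffMap (fun y => |f y|) x)) =ᵐ[μ01] fun x => |f x| := by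
  have hσ := measurePreserving_ryffMap hf.abs
  refine ae_eq_of_le_of_measure_lt_eq
    ((measurable_decRearr hf).comp hσ.measurable).aemeasurable (decRearr_ryffMap_le f) fun s => ?_
  rcases lt_or_ge s 0 with hs | hs
  · have hu : ∀ t, s < decRearr f t := fun t => hs.trans_le (decRearr_nonneg f t)
    have hv : ∀ x, s < |f x| := fun x => hs.trans_le (abs_nonneg (f x))
    simp only [hu, hv, ofPred_true]
  · exact (hσ.measure_preimage (measurable_decRearr hf measurableSet_Ioi).nullMeasurableSet).trans
      (measure_lt_decRearr hf hs)

end Rearrangement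

section PushforwardDensity

variable {α β : Type*} [MeasurableSpace α] [MeasurableSpace β] {μ : Measure α} {ν : Measure β}
  {σ : α → β}

def pushDensity (σ : α → β) (μ : Measure α) (ν : Measure β) (h : α → ℝ≥0∞) : β → ℝ≥0∞ :=
  ((μ.withDensity h).map σ).rnDeriv ν

lemma measurable_pushDensity (h : α → ℝ≥0∞) : Measurable (pushDensity σ μ ν h) :=
  Measure.measurable_rnDeriv _ _

lemma eLpNorm_eq_eLpNorm_ofReal {u : α → ℝ} (hu : ∀ x, 0 ≤ u x) (p : ℝ≥0∞) :
    eLpNorm u p μ = eLpNorm (fun x => ENNReal.ofReal (u x)) p μ := by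
  rw [← eLpNorm_enorm]
  simp only [Real.enorm_of_nonneg (hu _)]

variable [SFinite μ] [SigmaFinite ν]

lemma setLIntegral_pushDensity (hσ : MeasurePreserving σ μ ν) (h : α → ℝ≥0∞) {A : Set β}
    (hA : MeasurableSet A) :
    ∫⁻ y in A, pushDensity σ μ ν h y ∂ν = ∫⁻ x in σ ⁻¹' A, h x ∂μ := by
  have hac : (μ.withDensity h).map σ ≪ ν :=
    hσ.map_eq ▸ (withDensity_absolutelyContinuous μ h).map hσ.measurable
  rw [pushDensity, Measure.setLIntegral_rnDeriv hac, Measure.map_apply hσ.measurable hA,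
    withDensity_apply _ (hσ.measurable hA)]

lemma lintegral_pushDensity (hσ : MeasurePreserving σ μ ν) (h : α → ℝ≥0∞) :
    ∫⁻ y, pushDensity σ μ ν h y ∂ν = ∫⁻ x, h x ∂μ := by
  simpa using setLIntegral_pushDensity hσ h MeasurableSet.univ

lemma ae_pushDensity_le (hσ : MeasurePreserving σ μ ν) {h : α → ℝ≥0∞} {C : ℝ≥0∞}
    (hC : ∀ᵐ x ∂μ, h x ≤ C) : ∀ᵐ y ∂ν, pushDensity σ μ ν h y ≤ C := by
  refine ae_le_of_forall_setLIntegral_le_of_sigmaFinite (measurable_pushDensity h)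
    fun A hA _ => ?_
  calc ∫⁻ y in A, pushDensity σ μ ν h y ∂ν = ∫⁻ x in σ ⁻¹' A, h x ∂μ :=
        setLIntegral_pushDensity hσ h hA
    _ ≤ ∫⁻ _ in σ ⁻¹' A, C ∂μ := lintegral_mono_ae (ae_restrict_of_ae hC)
    _ = ∫⁻ _ in A, C ∂ν := by
        rw [setLIntegral_const, setLIntegral_const, hσ.measure_preimage hA.nullMeasurableSet]

lemma ae_le_tsum_pushDensity {ι : Type*} [Countable ι] (hσ : MeasurePreserving σ μ ν)
    {R : β → ℝ≥0∞} (hR : Measurable R) {h : ι → α → ℝ≥0∞} (hh : ∀ i, AEMeasurable (h i) μ)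
    (hRh : ∀ᵐ x ∂μ, R (σ x) ≤ ∑' i, h i x) :
    ∀ᵐ y ∂ν, R y ≤ ∑' i, pushDensity σ μ ν (h i) y := by
  refine ae_le_of_forall_setLIntegral_le_of_sigmaFinite hR fun A hA _ => ?_
  calc ∫⁻ y in A, R y ∂ν = ∫⁻ x in σ ⁻¹' A, R (σ x) ∂μ :=
        (hσ.setLIntegral_comp_preimage hA hR).symm
    _ ≤ ∫⁻ x in σ ⁻¹' A, ∑' i, h i x ∂μ := lintegral_mono_ae (ae_restrict_of_ae hRh)
    _ = ∑' i, ∫⁻ x in σ ⁻¹' A, h i x ∂μ := lintegral_tsum fun i => (hh i).restrict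
    _ = ∑' i, ∫⁻ y in A, pushDensity σ μ ν (h i) y ∂ν := by
        simp_rw [setLIntegral_pushDensity hσ _ hA]
    _ = ∫⁻ y in A, ∑' i, pushDensity σ μ ν (h i) y ∂ν :=
        (lintegral_tsum fun i => (measurable_pushDensity _).aemeasurable).symm

/-- `w i ∘ σ` is the conditional expectation of `u i` given `σ`. -/
theorem exists_pushforward_decomposition {ι : Type*} [Countable ι]
    (hσ : MeasurePreserving σ μ ν) {u : ι → α → ℝ} (hu : ∀ i, AEMeasurable (u i) μ)
    (hu0 : ∀ i x, 0 ≤ u i x) (hu_top : ∀ i, eLpNorm (u i) ⊤ μ ≠ ⊤) {R : β → ℝ≥0∞}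
    (hR : Measurable R) (hRu : ∀ᵐ x ∂μ, R (σ x) ≤ ∑' i, ENNReal.ofReal (u i x)) :
    ∃ w : ι → β → ℝ, (∀ i, Measurable (w i)) ∧ (∀ i y, 0 ≤ w i y) ∧
      (∀ i, eLpNorm (w i) ⊤ ν ≤ eLpNorm (u i) ⊤ μ) ∧
      (∀ i, eLpNorm (w i) 1 ν = eLpNorm (u i) 1 μ) ∧
      ∀ᵐ y ∂ν, R y ≤ ∑' i, ENNReal.ofReal (w i y) := by
  set k : ι → β → ℝ≥0∞ := fun i => pushDensity σ μ ν fun x => ENNReal.ofReal (u i x)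
  have hk_le : ∀ i, ∀ᵐ y ∂ν, k i y ≤ eLpNorm (u i) ⊤ μ := fun i => by
    refine ae_pushDensity_le hσ ?_
    filter_upwards [enorm_ae_le_eLpNormEssSup (u i) μ] with x hx
    rwa [Real.enorm_of_nonneg (hu0 i x), ← eLpNorm_exponent_top] at hx
  have hk : ∀ i, (fun y => ENNReal.ofReal (k i y).toReal) =ᵐ[ν] k i := fun i => by
    filter_upwards [hk_le i] with y hy
    exact ENNReal.ofReal_toReal (ne_top_of_le_ne_top (hu_top i) hy)
  have hw : ∀ i p, eLpNorm (fun y => (k i y).toReal) p ν = eLpNorm (k i) p ν := fun i p => by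
    rw [eLpNorm_eq_eLpNorm_ofReal (fun _ => ENNReal.toReal_nonneg), eLpNorm_congr_ae (hk i)]
  refine ⟨fun i y => (k i y).toReal, fun i => (measurable_pushDensity _).ennreal_toReal,
    fun i y => ENNReal.toReal_nonneg, fun i => ?_, fun i => ?_, ?_⟩
  · rw [hw, eLpNorm_exponent_top]
    exact eLpNormEssSup_le_of_ae_enorm_bound (hk_le i)
  · rw [hw, eLpNorm_eq_eLpNorm_ofReal (hu0 i), eLpNorm_one_eq_lintegral_enorm,
      eLpNorm_one_eq_lintegral_enorm]
    exact lintegral_pushDensity hσ _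
  · filter_upwards [ae_le_tsum_pushDensity hσ hR (fun i => (hu i).ennreal_ofReal) hRu,
      ae_all_iff.2 hk] with y hy hyk
    simpa only [hyk] using hy

end PushforwardDensity

lemma mul_map_div_le_mul_map_div {φ : ℝ → ℝ} (hφ : ConcaveOn ℝ (Icc 0 1) φ) (hφ0 : 0 ≤ φ 0)
    {a a' b : ℝ} (hb : 0 ≤ b) (hba' : b ≤ a') (ha' : a' ≤ a) :
    a' * φ (b / a') ≤ a * φ (b / a) := by
  rcases (hb.trans hba').eq_or_lt with rfl | ha'0
  · rw [zero_mul, le_antisymm hba' hb, zero_div]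
    exact mul_nonneg ha' hφ0
  have ha : 0 < a := ha'0.trans_le ha'
  have hθ : a' / a ≤ 1 := (div_le_one ha).2 ha'
  have hconc := hφ.2 ⟨div_nonneg hb ha'0.le, (div_le_one ha'0).2 hba'⟩ ⟨le_rfl, zero_le_one⟩
    (div_nonneg ha'0.le ha.le) (sub_nonneg.2 hθ) (add_sub_cancel _ _)
  simp only [smul_eq_mul, mul_zero, add_zero] at hconc
  rw [show a' / a * (b / a') = b / a by field_simp] at hconc
  have hrest : 0 ≤ (1 - a' / a) * φ 0 := mul_nonneg (sub_nonneg.2 hθ) hφ0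
  calc a' * φ (b / a') = a * (a' / a * φ (b / a')) := by field_simp
    _ ≤ a * φ (b / a) := mul_le_mul_of_nonneg_left (by linarith) ha.le

lemma seqCost_le_seqCost {φ ψ : ℝ → ℝ} (hφ : ConcaveOn ℝ (Icc 0 1) φ) (hφ0 : 0 ≤ φ 0)
    (hψ : ∀ n : ℕ, 0 ≤ ψ ((n : ℝ) + 1)) {u w : ℕ → ℝ → ℝ}
    (hw : ∀ n, AEStronglyMeasurable (w n) μ01) (hu_top : ∀ n, eLpNorm (u n) ⊤ μ01 ≠ ⊤)
    (h_top : ∀ n, eLpNorm (w n) ⊤ μ01 ≤ eLpNorm (u n) ⊤ μ01)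
    (h_one : ∀ n, eLpNorm (w n) 1 μ01 = eLpNorm (u n) 1 μ01) :
    seqCost φ ψ w ≤ seqCost φ ψ u := by
  refine ENNReal.tsum_le_tsum fun n => ENNReal.ofReal_le_ofReal ?_
  have hw_one_top : eLpNorm (w n) 1 μ01 ≤ eLpNorm (w n) ⊤ μ01 :=
    eLpNorm_le_eLpNorm_of_exponent_le le_top (hw n)
  rw [← h_one n, mul_assoc, mul_assoc, ENNReal.toReal_div, ENNReal.toReal_div]
  exact mul_le_mul_of_nonneg_left (mul_map_div_le_mul_map_div hφ hφ0 ENNReal.toReal_nonneg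
    (ENNReal.toReal_mono (ne_top_of_le_ne_top (hu_top n) (h_top n)) hw_one_top)
    (ENNReal.toReal_mono (hu_top n) (h_top n))) (hψ n)

lemma decRearr_congr {f g : ℝ → ℝ}
    (hequi : ∀ s : ℝ, 0 ≤ s → μ01 {x | s < |f x|} = μ01 {x | s < |g x|}) :
    decRearr f = decRearr g := by
  funext t
  unfold decRearr
  congr 1
  ext s
  exact and_congr_right fun hs => by rw [hequi s hs]

theorem exists_admissible_of_equimeasurable {f g : ℝ → ℝ} (hf : Measurable f) (hg : Measurable g)
    (hequi : ∀ s : ℝ, 0 ≤ s → μ01 {x | s < |f x|} = μ01 {x | s < |g x|})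
    {u : ℕ → ℝ → ℝ} (hu : Admissible f u) :
    ∃ w, Admissible g w ∧ (∀ n, AEStronglyMeasurable (w n) μ01) ∧
      (∀ n, eLpNorm (w n) ⊤ μ01 ≤ eLpNorm (u n) ⊤ μ01) ∧
      (∀ n, eLpNorm (w n) 1 μ01 = eLpNorm (u n) 1 μ01) := by
  obtain ⟨hu_meas, hu_top, hu0, hu_dom⟩ := hu
  have hσf := measurePreserving_ryffMap hf.abs
  have hσg := measurePreserving_ryffMap hg.abs
  have hdom : ∀ᵐ x ∂μ01, ENNReal.ofReal (decRearr f (ryffMap (fun y => |f y|) x)) ≤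
      ∑' n, ENNReal.ofReal (u n x) := by
    filter_upwards [hu_dom] with x hx
    exact (ENNReal.ofReal_le_ofReal (decRearr_ryffMap_le f x)).trans hx
  obtain ⟨v, hv_meas, hv0, hv_top, hv_one, hv_dom⟩ := exists_pushforward_decomposition hσf
    hu_meas hu0 (fun n => (hu_top n).ne) (ENNReal.measurable_ofReal.comp (measurable_decRearr hf))
    hdom
  have hw_meas : ∀ n, AEStronglyMeasurable (v n ∘ ryffMap fun y => |g y|) μ01 := fun n =>
    ((hv_meas n).comp hσg.measurable).aestronglyMeasurable
  have hw_norm : ∀ n p, eLpNorm (v n ∘ ryffMap fun y => |g y|) p μ01 = eLpNorm (v n) p μ01 :=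
    fun n p => eLpNorm_comp_measurePreserving (hv_meas n).aestronglyMeasurable hσg
  refine ⟨fun n => v n ∘ ryffMap fun y => |g y|, ⟨fun n => (hw_meas n).aemeasurable,
    fun n => ?_, fun n x => hv0 n _, ?_⟩, hw_meas, fun n => ?_, fun n => ?_⟩
  · rw [hw_norm]
    exact (hv_top n).trans_lt (hu_top n)
  · filter_upwards [decRearr_comp_ryffMap_ae_eq hg, hσg.quasiMeasurePreserving.ae hv_dom]
      with x hx hx_dom
    rw [← hx, ← decRearr_congr hequi]
    exact hx_dom
  · rw [hw_norm]
    exact hv_top n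
  · rw [hw_norm]
    exact hv_one n

lemma QANorm_le_of_equimeasurable {φ ψ : ℝ → ℝ} (hφ : ConcaveOn ℝ (Icc 0 1) φ) (hφ0 : 0 ≤ φ 0)
    (hψ : ∀ n : ℕ, 0 ≤ ψ ((n : ℝ) + 1)) {f g : ℝ → ℝ} (hf : Measurable f) (hg : Measurable g)
    (hequi : ∀ s : ℝ, 0 ≤ s → μ01 {x | s < |f x|} = μ01 {x | s < |g x|}) :
    QANorm φ ψ g ≤ QANorm φ ψ f := by
  refine le_iInf₂ fun u hu => ?_
  obtain ⟨w, hw, hw_meas, hw_top, hw_one⟩ := exists_admissible_of_equimeasurable hf hg hequi hu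
  exact (iInf₂_le w hw).trans
    (seqCost_le_seqCost hφ hφ0 hψ hw_meas (fun n => (hu.2.1 n).ne) hw_top hw_one)

lemma admissible_congr_ae {f f' : ℝ → ℝ} (h : f =ᵐ[μ01] f') {u : ℕ → ℝ → ℝ}
    (hu : Admissible f u) : Admissible f' u := by
  refine ⟨hu.1, hu.2.1, hu.2.2.1, ?_⟩
  filter_upwards [h, hu.2.2.2] with x hx hxu
  rwa [← hx]

lemma QANorm_congr_ae {φ ψ f f' : ℝ → ℝ} (h : f =ᵐ[μ01] f') : QANorm φ ψ f = QANorm φ ψ f' :=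
  le_antisymm (le_iInf₂ fun u hu => iInf₂_le u (admissible_congr_ae h.symm hu))
    (le_iInf₂ fun u hu => iInf₂_le u (admissible_congr_ae h hu))

lemma measure_lt_abs_congr_ae {f f' : ℝ → ℝ} (h : f =ᵐ[μ01] f') (s : ℝ) :
    μ01 {x | s < |f x|} = μ01 {x | s < |f' x|} :=
  measure_congr (h.mono fun x hx => show (s < |f x|) = (s < |f' x|) by rw [hx])

/-- `QA_{φ,ψ}` is rearrangement invariant: equimeasurable functions have
the same quasi-norm. -/
theorem stmt6 {φ ψ : ℝ → ℝ} (hφ : IsPhi φ) (hψ : IsPsi ψ)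
    (f g : ℝ → ℝ) (hf : AEMeasurable f μ01) (hg : AEMeasurable g μ01)
    (hequi : ∀ s : ℝ, 0 ≤ s → μ01 {x | s < |f x|} = μ01 {x | s < |g x|}) :
    QANorm φ ψ f = QANorm φ ψ g := by
  have hψ' : ∀ n : ℕ, 0 ≤ ψ ((n : ℝ) + 1) := fun n => (hψ.pos _ (by positivity)).le
  have hequi' : ∀ s : ℝ, 0 ≤ s → μ01 {x | s < |hf.mk f x|} = μ01 {x | s < |hg.mk g x|} :=
    fun s hs => by
      rw [← measure_lt_abs_congr_ae hf.ae_eq_mk, ← measure_lt_abs_congr_ae hg.ae_eq_mk, hequi s hs]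
  rw [QANorm_congr_ae hf.ae_eq_mk, QANorm_congr_ae hg.ae_eq_mk]
  exact le_antisymm
    (QANorm_le_of_equimeasurable hφ.concave hφ.zero.ge hψ' hg.measurable_mk hf.measurable_mk
      fun s hs => (hequi' s hs).symm)
    (QANorm_le_of_equimeasurable hφ.concave hφ.zero.ge hψ' hf.measurable_mk hg.measurable_mk hequi')
end
end

section
/- The set of simple functions is dense in $QA_{\varphi,\psi}$: for every $f\in QA_{\varphi,\psi}$ and every $\varepsilon>0$ there exists a simple function $s$ on $[0,1]$ (a finite linear combination of characteristic functions of measurable sets) such that $\|f-s\|_{\varphi,\psi}<\varepsilon$. -/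
open MeasureTheory ENNReal Set Filter Topology

noncomputable section

lemma toReal_eLpNorm_one_div_eLpNorm_top_mem_Icc {α : Type*} [MeasurableSpace α]
    {μ : Measure α} [IsProbabilityMeasure μ] {u : α → ℝ} (hu : AEStronglyMeasurable u μ) :
    (eLpNorm u 1 μ / eLpNorm u ⊤ μ).toReal ∈ Icc (0 : ℝ) 1 := by
  have h : eLpNorm u 1 μ / eLpNorm u ⊤ μ ≤ 1 :=
    ENNReal.div_le_of_le_mul (by simpa using eLpNorm_le_eLpNorm_of_exponent_le le_top hu)
  exact ⟨ENNReal.toReal_nonneg, by simpa using ENNReal.toReal_mono ENNReal.one_ne_top h⟩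

lemma abs_sub_max_neg_min {M : ℝ} (hM : 0 ≤ M) (a : ℝ) :
    |a - max (-M) (min M a)| = max (|a| - M) 0 := by
  rcases le_total a M with h₁ | h₁ <;> rcases le_total (-M) a with h₂ | h₂ <;>
    grind [abs_of_nonneg, abs_of_nonpos]

lemma ofReal_le_add_of_le_add_max {a b δ M : ℝ} {T : ℝ≥0∞} (hM : 0 ≤ M) (hδ : 0 ≤ δ)
    (ha : ENNReal.ofReal |a| ≤ ENNReal.ofReal M + T) (hb : b ≤ δ + max (|a| - M) 0) :
    ENNReal.ofReal b ≤ ENNReal.ofReal δ + T := by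
  calc ENNReal.ofReal b ≤ ENNReal.ofReal δ + ENNReal.ofReal (max (|a| - M) 0) := by
        rw [← ENNReal.ofReal_add hδ (le_max_right _ _)]
        exact ENNReal.ofReal_le_ofReal hb
    _ ≤ ENNReal.ofReal δ + T := by
        rw [ENNReal.ofReal_max, ENNReal.ofReal_zero, max_eq_left zero_le, ENNReal.ofReal_sub _ hM]
        exact add_le_add le_rfl (tsub_le_iff_left.mpr ha)

lemma exists_simpleFunc_abs_sub_le {α : Type*} [MeasurableSpace α] {F : α → ℝ}
    (hF : Measurable F) {M : ℝ} (hFM : ∀ x, |F x| ≤ M) {δ : ℝ} (hδ : 0 < δ) :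
    ∃ s : SimpleFunc α ℝ, ∀ x, |F x - s x| ≤ δ := by
  set q : α → ℝ := fun x => δ * ⌊F x / δ⌋
  have hqm : Measurable q := measurable_const.mul (measurable_from_top.comp (hF.div_const δ).floor)
  have hqfin : (range q).Finite := by
    refine ((finite_Icc ⌊-(M / δ)⌋ ⌊M / δ⌋).image fun k : ℤ => δ * k).subset ?_
    rintro _ ⟨x, rfl⟩
    refine ⟨⌊F x / δ⌋, ⟨Int.floor_le_floor ?_, Int.floor_le_floor ?_⟩, rfl⟩
    · rw [← neg_div]
      exact div_le_div_of_nonneg_right (neg_le_of_abs_le (hFM x)) hδ.le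
    · exact div_le_div_of_nonneg_right (le_of_abs_le (hFM x)) hδ.le
  refine ⟨⟨q, fun y => hqm (measurableSet_singleton y), hqfin⟩, fun x => ?_⟩
  have h₁ : δ * ⌊F x / δ⌋ ≤ F x := by
    simpa [mul_div_cancel₀ _ hδ.ne'] using mul_le_mul_of_nonneg_left (Int.floor_le (F x / δ)) hδ.le
  have h₂ : F x < δ * ⌊F x / δ⌋ + δ := by
    have := mul_lt_mul_of_pos_left (Int.sub_one_lt_floor (F x / δ)) hδ
    rw [mul_sub, mul_div_cancel₀ _ hδ.ne'] at this
    linarith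
  show |F x - δ * ⌊F x / δ⌋| ≤ δ
  exact abs_le.mpr ⟨by linarith, by linarith⟩

lemma exists_simpleFunc_ae_abs_sub_le {α : Type*} [MeasurableSpace α]
    {μ : Measure α} {f : α → ℝ} (hf : AEMeasurable f μ) {M : ℝ} (hM : 0 ≤ M) {δ : ℝ}
    (hδ : 0 < δ) : ∃ s : SimpleFunc α ℝ, ∀ᵐ x ∂μ, |f x - s x| ≤ δ + max (|f x| - M) 0 := by
  set F := fun x => max (-M) (min M (hf.mk f x))
  have hF : Measurable F := measurable_const.max (measurable_const.min hf.measurable_mk)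
  obtain ⟨s, hs⟩ := exists_simpleFunc_abs_sub_le hF
    (fun x => abs_le.mpr ⟨le_max_left _ _, max_le (by linarith) (min_le_left _ _)⟩) hδ
  refine ⟨s, ?_⟩
  filter_upwards [hf.ae_eq_mk] with x hfx
  calc |f x - s x| ≤ |F x - s x| + |f x - F x| := (abs_sub_le _ _ _).trans_eq (add_comm _ _)
    _ ≤ δ + max (|f x| - M) 0 := by
        rw [← abs_sub_max_neg_min hM, hfx]
        exact add_le_add (hs x) le_rfl

lemma ENNReal.exists_one_le_tsum_nat_add_lt {t : ℕ → ℝ≥0∞} (ht : ∑' n, t n ≠ ⊤) {ε : ℝ≥0∞}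
    (hε : 0 < ε) : ∃ N, 1 ≤ N ∧ ∑' k, t (k + N) < ε := by
  obtain ⟨N, hN, hN1⟩ :=
    (((ENNReal.tendsto_sum_nat_add t ht).eventually_lt_const hε).and (eventually_ge_atTop 1)).exists
  exact ⟨N, hN1, hN⟩

section QA

variable {φ ψ : ℝ → ℝ}

def costTerm (φ ψ : ℝ → ℝ) (n : ℕ) (u : ℝ → ℝ) : ℝ :=
  ψ ((n : ℝ) + 1) * (eLpNorm u ⊤ μ01).toReal * φ ((eLpNorm u 1 μ01 / eLpNorm u ⊤ μ01).toReal)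

lemma seqCost_eq_tsum_costTerm (g : ℕ → ℝ → ℝ) :
    seqCost φ ψ g = ∑' n, ENNReal.ofReal (costTerm φ ψ n (g n)) := rfl

lemma IsPhi.apply_ratio_mem_Icc {u : ℝ → ℝ} (hφ : IsPhi φ) (hu : AEMeasurable u μ01) :
    φ ((eLpNorm u 1 μ01 / eLpNorm u ⊤ μ01).toReal) ∈ Icc 0 (φ 1) := by
  have hr := toReal_eLpNorm_one_div_eLpNorm_top_mem_Icc hu.aestronglyMeasurable
  exact ⟨hφ.zero ▸ hφ.mono (left_mem_Icc.mpr zero_le_one) hr hr.1,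
    hφ.mono hr (right_mem_Icc.mpr zero_le_one) hr.2⟩

lemma costTerm_mono (hφ : IsPhi φ) (hψ : IsPsi ψ) {u : ℝ → ℝ} (hu : AEMeasurable u μ01)
    {m n : ℕ} (hmn : m ≤ n) : costTerm φ ψ m u ≤ costTerm φ ψ n u := by
  have hψmn : ψ ((m : ℝ) + 1) ≤ ψ ((n : ℝ) + 1) :=
    hψ.mono (mem_Ici.mpr (by positivity)) (mem_Ici.mpr (by positivity)) (by gcongr)
  unfold costTerm
  gcongr
  exact (hφ.apply_ratio_mem_Icc hu).1

lemma costTerm_zero_le (hφ : IsPhi φ) (hψ : IsPsi ψ) {u : ℝ → ℝ} (hu : AEMeasurable u μ01)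
    {δ : ℝ} (hδ : 0 ≤ δ) (huδ : eLpNorm u ⊤ μ01 ≤ ENNReal.ofReal δ) :
    costTerm φ ψ 0 u ≤ ψ 1 * φ 1 * δ := by
  have hψ1 : 0 ≤ ψ 1 := (hψ.pos 1 one_pos).le
  have hu' : (eLpNorm u ⊤ μ01).toReal ≤ δ := ENNReal.toReal_le_of_le_ofReal hδ huδ
  obtain ⟨h₀, h₁⟩ := hφ.apply_ratio_mem_Icc hu
  calc costTerm φ ψ 0 u
      = ψ 1 * (eLpNorm u ⊤ μ01).toReal * φ ((eLpNorm u 1 μ01 / eLpNorm u ⊤ μ01).toReal) := by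
        simp [costTerm]
    _ ≤ ψ 1 * δ * φ 1 := by gcongr
    _ = ψ 1 * φ 1 * δ := by ring

lemma QANorm_le_seqCost {f : ℝ → ℝ} {g : ℕ → ℝ → ℝ} (hg : Admissible f g) :
    QANorm φ ψ f ≤ seqCost φ ψ g :=
  iInf₂_le g hg

lemma MemQA.exists_admissible_seqCost_lt_top {f : ℝ → ℝ} (hf : MemQA φ ψ f) :
    ∃ g, Admissible f g ∧ seqCost φ ψ g < ⊤ := by
  obtain ⟨g, hg⟩ := iInf_lt_iff.mp hf.2
  obtain ⟨hadm, hcost⟩ := iInf_lt_iff.mp hg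
  exact ⟨g, hadm, hcost⟩

lemma Admissible.ae_ofReal_abs_le {f : ℝ → ℝ} {g : ℕ → ℝ → ℝ} (hg : Admissible f g) (N : ℕ) :
    ∀ᵐ x ∂μ01, ENNReal.ofReal |f x| ≤
      ENNReal.ofReal (∑ i ∈ Finset.range N, (eLpNorm (g i) ⊤ μ01).toReal) +
        ∑' k, ENNReal.ofReal (g (k + N) x) := by
  have hbound : ∀ᵐ x ∂μ01, ∀ n, ENNReal.ofReal (g n x) ≤ eLpNorm (g n) ⊤ μ01 := by
    refine ae_all_iff.mpr fun n => ?_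
    filter_upwards [ae_le_eLpNormEssSup (f := g n) (μ := μ01)] with x hx
    calc ENNReal.ofReal (g n x) ≤ ‖g n x‖ₑ := by
          rw [← ofReal_norm]; exact ENNReal.ofReal_le_ofReal (le_abs_self _)
      _ ≤ _ := by simpa using hx
  filter_upwards [hg.2.2.2, hbound] with x hx hbx
  rw [ENNReal.ofReal_sum_of_nonneg fun i _ => ENNReal.toReal_nonneg]
  calc ENNReal.ofReal |f x| ≤ ∑' n, ENNReal.ofReal (g n x) := hx
    _ = ∑ i ∈ Finset.range N, ENNReal.ofReal (g i x) + ∑' k, ENNReal.ofReal (g (k + N) x) :=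
        (ENNReal.summable.sum_add_tsum_nat_add').symm
    _ ≤ _ := add_le_add (Finset.sum_le_sum fun i _ =>
          (hbx i).trans_eq (ENNReal.ofReal_toReal (hg.2.1 i).ne).symm) le_rfl

def prependTail (h : ℝ → ℝ) (g : ℕ → ℝ → ℝ) (N : ℕ) : ℕ → ℝ → ℝ
  | 0 => h
  | k + 1 => g (k + N)

lemma admissible_prependTail {f f' h : ℝ → ℝ} {g : ℕ → ℝ → ℝ} {N : ℕ} (hg : Admissible f g)
    (hhm : AEMeasurable h μ01) (hh : eLpNorm h ⊤ μ01 < ⊤) (hh₀ : ∀ x, 0 ≤ h x)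
    (hf' : ∀ᵐ x ∂μ01, ENNReal.ofReal |f' x| ≤
      ENNReal.ofReal (h x) + ∑' k, ENNReal.ofReal (g (k + N) x)) :
    Admissible f' (prependTail h g N) := by
  obtain ⟨hgm, hgb, hg₀, -⟩ := hg
  refine ⟨fun n => ?_, fun n => ?_, fun n => ?_, ?_⟩
  · cases n <;> simp only [prependTail, hhm, hgm]
  · cases n <;> simp only [prependTail, hh, hgb]
  · cases n <;> simp only [prependTail, hh₀, hg₀, implies_true]
  · filter_upwards [hf'] with x hx
    rwa [tsum_eq_zero_add' ENNReal.summable]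

lemma seqCost_prependTail_le (hφ : IsPhi φ) (hψ : IsPsi ψ) {h : ℝ → ℝ} {g : ℕ → ℝ → ℝ}
    {N : ℕ} (hN : 1 ≤ N) (hhm : AEMeasurable h μ01) (hgm : ∀ n, AEMeasurable (g n) μ01)
    {δ : ℝ} (hδ : 0 ≤ δ) (hhδ : eLpNorm h ⊤ μ01 ≤ ENNReal.ofReal δ) :
    seqCost φ ψ (prependTail h g N) ≤ ENNReal.ofReal (ψ 1 * φ 1 * δ) +
      ∑' k, ENNReal.ofReal (costTerm φ ψ (k + N) (g (k + N))) := by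
  rw [seqCost_eq_tsum_costTerm, tsum_eq_zero_add' ENNReal.summable]
  gcongr with k
  · exact costTerm_zero_le hφ hψ hhm hδ hhδ
  · exact costTerm_mono hφ hψ (hgm _) (by omega)

end QA

/-- simple functions are dense in `QA_{φ,ψ}`. -/
theorem stmt7 {φ ψ : ℝ → ℝ} (hφ : IsPhi φ) (hψ : IsPsi ψ)
    (f : ℝ → ℝ) (hf : MemQA φ ψ f) (ε : ℝ) (hε : 0 < ε) :
    ∃ s : SimpleFunc ℝ ℝ, QANorm φ ψ (f - ⇑s) < ENNReal.ofReal ε := by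
  obtain ⟨g, hg, hcost⟩ := hf.exists_admissible_seqCost_lt_top
  have hε₂ : 0 < ε / 2 := half_pos hε
  obtain ⟨N, hN, htail⟩ := ENNReal.exists_one_le_tsum_nat_add_lt
    (t := fun n => ENNReal.ofReal (costTerm φ ψ n (g n))) hcost.ne (ENNReal.ofReal_pos.mpr hε₂)
  obtain ⟨δ, hδ, hδε⟩ := exists_pos_mul_lt hε₂ (ψ 1 * φ 1)
  set M := ∑ i ∈ Finset.range N, (eLpNorm (g i) ⊤ μ01).toReal
  have hM : 0 ≤ M := Finset.sum_nonneg fun i _ => ENNReal.toReal_nonneg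
  obtain ⟨s, hs⟩ := exists_simpleFunc_ae_abs_sub_le hf.1 hM hδ
  have hδ' : eLpNorm (fun _ => δ) ⊤ μ01 ≤ ENNReal.ofReal δ :=
    eLpNormEssSup_le_of_ae_bound (ae_of_all _ fun _ => by simp [abs_of_pos hδ])
  have hadm : Admissible (f - ⇑s) (prependTail (fun _ => δ) g N) := by
    refine admissible_prependTail hg aemeasurable_const (hδ'.trans_lt ENNReal.ofReal_lt_top)
      (fun _ => hδ.le) ?_
    filter_upwards [hg.ae_ofReal_abs_le N, hs] with x hx hsx
    exact ofReal_le_add_of_le_add_max hM hδ.le hx hsx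
  refine ⟨s, ?_⟩
  calc QANorm φ ψ (f - ⇑s) ≤ seqCost φ ψ (prependTail (fun _ => δ) g N) := QANorm_le_seqCost hadm
    _ ≤ ENNReal.ofReal (ψ 1 * φ 1 * δ) +
          ∑' k, ENNReal.ofReal (costTerm φ ψ (k + N) (g (k + N))) :=
        seqCost_prependTail_le hφ hψ hN aemeasurable_const hg.1 hδ.le hδ'
    _ < ENNReal.ofReal (ε / 2) + ENNReal.ofReal (ε / 2) :=
        ENNReal.add_lt_add_of_le_of_lt ENNReal.ofReal_ne_top (ENNReal.ofReal_le_ofReal hδε.le) htail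
    _ = ENNReal.ofReal ε := by rw [← ENNReal.ofReal_add hε₂.le hε₂.le, add_halves]
end
end

section
/- $QA_{\varphi,\psi}=L^\infty$ if and only if $\varphi(0_+)\ne 0$. Precisely: there exists a constant $K>0$ such that $\|f\|_\infty\le K\,\|f\|_{\varphi,\psi}$ for every $f\in QA_{\varphi,\psi}$ (equivalently, $QA_{\varphi,\psi}\subseteq L^\infty[0,1]$ with equivalent norms, since $\|f\|_{\varphi,\psi}\le\varphi(1)\psi(1)\|f\|_\infty$ always holds) if and only if $\lim_{t\to 0_+}\varphi(t)>0$. -/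
open MeasureTheory ENNReal Set Filter Topology

noncomputable section

lemma μ01_Icc_zero {t : ℝ} (ht1 : t ≤ 1) : μ01 (Icc 0 t) = ENNReal.ofReal t := by
  rw [μ01, Measure.restrict_apply measurableSet_Icc,
    inter_eq_left.2 (Icc_subset_Icc le_rfl ht1), Real.volume_Icc, sub_zero]

section Lp

variable {α : Type*} [MeasurableSpace α] {μ : Measure α}

lemma eLpNorm_top_le_tsum_of_ae_le {f : α → ℝ} {g : ℕ → α → ℝ}
    (hfg : ∀ᵐ x ∂μ, ENNReal.ofReal |f x| ≤ ∑' n, ENNReal.ofReal (g n x)) :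
    eLpNorm f ⊤ μ ≤ ∑' n, eLpNorm (g n) ⊤ μ := by
  rw [eLpNorm_exponent_top]
  refine essSup_le_of_ae_le _ ?_
  filter_upwards [ae_all_iff.2 fun n => ae_le_eLpNormEssSup (f := g n) (μ := μ), hfg]
    with x hgx hfx
  calc ‖f x‖ₑ = ENNReal.ofReal |f x| := Real.enorm_eq_ofReal_abs _
    _ ≤ ∑' n, ENNReal.ofReal (g n x) := hfx
    _ ≤ ∑' n, eLpNorm (g n) ⊤ μ := ENNReal.tsum_le_tsum fun n =>
        (Real.ofReal_le_enorm _).trans (by rw [eLpNorm_exponent_top]; exact hgx n)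

lemma toReal_eLpNorm_one_div_eLpNorm_top_mem_Ioc [IsProbabilityMeasure μ] {g : α → ℝ}
    (hg : AEStronglyMeasurable g μ) (h0 : eLpNorm g ⊤ μ ≠ 0) (htop : eLpNorm g ⊤ μ ≠ ⊤) :
    (eLpNorm g 1 μ / eLpNorm g ⊤ μ).toReal ∈ Ioc 0 1 := by
  have hL0 : eLpNorm g 1 μ ≠ 0 := fun hL => h0 <| by
    rw [eLpNorm_congr_ae ((eLpNorm_eq_zero_iff hg one_ne_zero).1 hL), eLpNorm_zero]
  have hle : eLpNorm g 1 μ / eLpNorm g ⊤ μ ≤ 1 :=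
    ENNReal.div_le_of_le_mul (by simpa using eLpNorm_le_eLpNorm_of_exponent_le le_top hg)
  exact ⟨ENNReal.toReal_pos (ENNReal.div_ne_zero.2 ⟨hL0, htop⟩) (ne_top_of_le_ne_top one_ne_top hle),
    ENNReal.toReal_le_of_le_ofReal zero_le_one (by simpa using hle)⟩

end Lp

section QA

variable {φ ψ : ℝ → ℝ}

lemma ofReal_mul_eLpNorm_top_le_cost (hψ : IsPsi ψ) {a : ℝ} (ha : 0 < a)
    (haφ : ∀ t : ℝ, 0 < t → t ≤ 1 → a ≤ φ t) {g : ℝ → ℝ} (hg : AEMeasurable g μ01)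
    (hg_top : eLpNorm g ⊤ μ01 < ⊤) (n : ℕ) :
    ENNReal.ofReal (a * ψ 1) * eLpNorm g ⊤ μ01 ≤
      ENNReal.ofReal (ψ ((n : ℝ) + 1) * (eLpNorm g ⊤ μ01).toReal *
        φ ((eLpNorm g 1 μ01 / eLpNorm g ⊤ μ01).toReal)) := by
  set M := eLpNorm g ⊤ μ01
  rcases eq_or_ne M 0 with hM0 | hM0
  · simp [hM0]
  obtain ⟨hr0, hr1⟩ :=
    toReal_eLpNorm_one_div_eLpNorm_top_mem_Ioc hg.aestronglyMeasurable hM0 hg_top.ne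
  set r := (eLpNorm g 1 μ01 / M).toReal
  have haφr : a ≤ φ r := haφ r hr0 hr1
  have hψ1 : 0 < ψ 1 := hψ.pos 1 one_pos
  have hψn : ψ 1 ≤ ψ ((n : ℝ) + 1) :=
    hψ.mono (mem_Ici.2 zero_le_one) (mem_Ici.2 (by positivity)) (by simp)
  calc ENNReal.ofReal (a * ψ 1) * M = ENNReal.ofReal (a * ψ 1 * M.toReal) := by
        rw [ENNReal.ofReal_mul (by positivity : (0 : ℝ) ≤ a * ψ 1), ENNReal.ofReal_toReal hg_top.ne]
    _ ≤ ENNReal.ofReal (φ r * ψ ((n : ℝ) + 1) * M.toReal) := by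
        gcongr
        exact ha.le.trans haφr
    _ = ENNReal.ofReal (ψ ((n : ℝ) + 1) * M.toReal * φ r) := by ring_nf

lemma ofReal_mul_eLpNorm_top_le_seqCost (hψ : IsPsi ψ) {a : ℝ} (ha : 0 < a)
    (haφ : ∀ t : ℝ, 0 < t → t ≤ 1 → a ≤ φ t) {f : ℝ → ℝ} {g : ℕ → ℝ → ℝ}
    (hg : Admissible f g) :
    ENNReal.ofReal (a * ψ 1) * eLpNorm f ⊤ μ01 ≤ seqCost φ ψ g := by
  obtain ⟨hmeas, hfin, -, hfg⟩ := hg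
  calc ENNReal.ofReal (a * ψ 1) * eLpNorm f ⊤ μ01
      ≤ ENNReal.ofReal (a * ψ 1) * ∑' n, eLpNorm (g n) ⊤ μ01 := by
        gcongr; exact eLpNorm_top_le_tsum_of_ae_le hfg
    _ = ∑' n, ENNReal.ofReal (a * ψ 1) * eLpNorm (g n) ⊤ μ01 := ENNReal.tsum_mul_left.symm
    _ ≤ seqCost φ ψ g := ENNReal.tsum_le_tsum fun n =>
        ofReal_mul_eLpNorm_top_le_cost hψ ha haφ (hmeas n) (hfin n) n

lemma eLpNorm_top_le_QANorm (hψ : IsPsi ψ) {a : ℝ} (ha : 0 < a)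
    (haφ : ∀ t : ℝ, 0 < t → t ≤ 1 → a ≤ φ t) (f : ℝ → ℝ) :
    eLpNorm f ⊤ μ01 ≤ ENNReal.ofReal (a * ψ 1)⁻¹ * QANorm φ ψ f := by
  have hc : 0 < a * ψ 1 := mul_pos ha (hψ.pos 1 one_pos)
  rw [ENNReal.ofReal_inv_of_pos hc, ← ENNReal.div_eq_inv_mul,
    ENNReal.le_div_iff_mul_le (Or.inl (ENNReal.ofReal_pos.2 hc).ne') (Or.inl ofReal_ne_top),
    mul_comm]
  exact le_iInf₂ fun g hg => ofReal_mul_eLpNorm_top_le_seqCost hψ ha haφ hg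

lemma QANorm_le_cost_self {f : ℝ → ℝ} (hf : AEMeasurable f μ01) (hf_nonneg : ∀ x, 0 ≤ f x)
    (hf_top : eLpNorm f ⊤ μ01 < ⊤) :
    QANorm φ ψ f ≤ ENNReal.ofReal (ψ 1 * (eLpNorm f ⊤ μ01).toReal *
      φ ((eLpNorm f 1 μ01 / eLpNorm f ⊤ μ01).toReal)) := by
  set g : ℕ → ℝ → ℝ := fun n => if n = 0 then f else 0
  have hadm : Admissible f g := by
    refine ⟨fun n => ?_, fun n => ?_, fun n x => ?_, ae_of_all _ fun x => ?_⟩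
    · by_cases hn : n = 0
      · simpa [g, hn] using hf
      · simpa [g, hn] using measurable_zero.aemeasurable
    · by_cases hn : n = 0
      · simpa [g, hn] using hf_top
      · simp [g, hn]
    · by_cases hn : n = 0 <;> simp [g, hn, hf_nonneg]
    · simpa [g, abs_of_nonneg (hf_nonneg x)] using
        ENNReal.le_tsum (f := fun n => ENNReal.ofReal (g n x)) 0
  refine (iInf₂_le g hadm).trans_eq ?_
  rw [seqCost, tsum_eq_single 0]
  · simp [g]
  · intro n hn
    simp [g, hn]

lemma eLpNorm_indicator_Icc_top {t : ℝ} (ht0 : 0 < t) (ht1 : t ≤ 1) :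
    eLpNorm ((Icc 0 t).indicator fun _ => (1 : ℝ)) ⊤ μ01 = 1 := by
  simp [eLpNorm_indicator_const' measurableSet_Icc (μ := μ01), μ01_Icc_zero ht1, ht0]

lemma eLpNorm_indicator_Icc_one {t : ℝ} (ht1 : t ≤ 1) :
    eLpNorm ((Icc 0 t).indicator fun _ => (1 : ℝ)) 1 μ01 = ENNReal.ofReal t := by
  simp [eLpNorm_indicator_const measurableSet_Icc one_ne_zero one_ne_top, μ01_Icc_zero ht1]

lemma QANorm_indicator_Icc_le {t : ℝ} (ht0 : 0 < t) (ht1 : t ≤ 1) :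
    QANorm φ ψ ((Icc 0 t).indicator fun _ => 1) ≤ ENNReal.ofReal (ψ 1 * φ t) := by
  refine (QANorm_le_cost_self (measurable_const.indicator measurableSet_Icc).aemeasurable
    (indicator_nonneg fun _ _ => zero_le_one)
    (by simp [eLpNorm_indicator_Icc_top ht0 ht1])).trans_eq ?_
  simp [eLpNorm_indicator_Icc_top ht0 ht1, eLpNorm_indicator_Icc_one ht1, ht0.le]

end QA

theorem stmt8_general {φ ψ : ℝ → ℝ} (hψ : IsPsi ψ) :
    (∃ K : ℝ, 0 < K ∧ ∀ f : ℝ → ℝ, AEMeasurable f μ01 → QANorm φ ψ f < ⊤ →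
      eLpNorm f ⊤ μ01 ≤ ENNReal.ofReal K * QANorm φ ψ f) ↔
    (∃ a : ℝ, 0 < a ∧ ∀ t : ℝ, 0 < t → t ≤ 1 → a ≤ φ t) := by
  have hψ1 : 0 < ψ 1 := hψ.pos 1 one_pos
  constructor
  · rintro ⟨K, hK, hbound⟩
    refine ⟨(K * ψ 1)⁻¹, by positivity, fun t ht0 ht1 => ?_⟩
    have hQ := QANorm_indicator_Icc_le (φ := φ) (ψ := ψ) ht0 ht1
    have h := hbound _ (measurable_const.indicator measurableSet_Icc).aemeasurable
      (hQ.trans_lt ofReal_lt_top)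
    have h1 : (1 : ℝ≥0∞) ≤ ENNReal.ofReal (K * (ψ 1 * φ t)) := by
      rw [ENNReal.ofReal_mul hK.le, ← eLpNorm_indicator_Icc_top ht0 ht1]
      exact h.trans (by gcongr)
    rw [ENNReal.one_le_ofReal] at h1
    rw [inv_le_iff_one_le_mul₀' (by positivity)]
    linarith
  · rintro ⟨a, ha, haφ⟩
    exact ⟨(a * ψ 1)⁻¹, by positivity, fun f _ _ => eLpNorm_top_le_QANorm hψ ha haφ f⟩

/-- `QA_{φ,ψ} = L^∞` (i.e. the reverse embedding
`‖f‖_∞ ≤ K ‖f‖_{φ,ψ}` holds on `QA_{φ,ψ}`) if and only if `φ(0⁺) > 0`. -/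
theorem stmt8 {φ ψ : ℝ → ℝ} (hφ : IsPhi φ) (hψ : IsPsi ψ) :
    (∃ K : ℝ, 0 < K ∧ ∀ f : ℝ → ℝ, AEMeasurable f μ01 → QANorm φ ψ f < ⊤ →
      eLpNorm f ⊤ μ01 ≤ ENNReal.ofReal K * QANorm φ ψ f) ↔
    (∃ a : ℝ, 0 < a ∧ ∀ t : ℝ, 0 < t → t ≤ 1 → a ≤ φ t) :=
  stmt8_general hψ
end
end
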